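/- Let W be a real m × n matrix such that W·Wᵀ is positive definite with eigenvalues s_1, …, s_m > 0, let ρ₁ ≥ (max_i s_i)/(min_i s_i), and let g, t ∈ ℝ^m be nonzero vectors (the estimated and true gradients of h = Wx). If ρ₁·cos ∠(g, t) + 1 − ρ₁ > 0, then the gradient estimation angle of the layer input satisfies ∠(Wᵀg, Wᵀt) ≤ arccos(ρ₁·cos ∠(g, t) + 1 − ρ₁). -/

import Mathlib

/-!
With `s_min`, `s_max` the extreme eigenvalues of `W Wᵀ`, the map `x ↦ Wᵀx` satisfies
`s_min ‖x‖² ≤ ‖Wᵀx‖² ≤ s_max ‖x‖²`. For unit vectors `u`, `v` the product `‖Wᵀu‖ ‖Wᵀv‖` is then at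
least `s_min`, and it exceeds `⟪Wᵀu, Wᵀv⟫` by at most `½ ‖Wᵀ(u - v)‖² ≤ s_max (1 - ⟪u, v⟫)`.
Dividing gives `cos ∠(Wᵀu, Wᵀv) ≥ 1 - (s_max / s_min) (1 - cos ∠(u, v))`, and `arccos` is antitone.
-/

open InnerProductGeometry Matrix
open scoped InnerProductSpace RealInnerProductSpace

namespace InnerProductGeometry

variable {E F : Type*} [NormedAddCommGroup E] [InnerProductSpace ℝ E]
  [NormedAddCommGroup F] [InnerProductSpace ℝ F]

theorem le_cos_angle_map_of_norm_eq_one (f : E →ₗ[ℝ] F) {a b : ℝ} (ha : 0 < a)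
    (hlo : ∀ x, a * ‖x‖ ^ 2 ≤ ‖f x‖ ^ 2) (hhi : ∀ x, ‖f x‖ ^ 2 ≤ b * ‖x‖ ^ 2)
    {x y : E} (hx : ‖x‖ = 1) (hy : ‖y‖ = 1) :
    1 - b / a * (1 - Real.cos (angle x y)) ≤ Real.cos (angle (f x) (f y)) := by
  have hfx : a ≤ ‖f x‖ ^ 2 := by simpa [hx] using hlo x
  have hfy : a ≤ ‖f y‖ ^ 2 := by simpa [hy] using hlo y
  have hxy : ⟪x, y⟫ ≤ 1 := by simpa [hx, hy] using real_inner_le_norm x y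
  set p := ‖f x‖ * ‖f y‖
  have hp : a ≤ p := by
    have : a ^ 2 ≤ p ^ 2 := by rw [mul_pow]; nlinarith
    exact le_of_pow_le_pow_left₀ two_ne_zero (by positivity) this
  have hgap : p - ⟪f x, f y⟫ ≤ b * (1 - ⟪x, y⟫) := by
    have h := hhi (x - y)
    rw [map_sub, norm_sub_sq_real, norm_sub_sq_real, hx, hy] at h
    nlinarith [sq_nonneg (‖f x‖ - ‖f y‖)]
  have hb : 0 ≤ b := by nlinarith [hhi x, hx]
  rw [cos_angle x y, hx, hy, mul_one, div_one, cos_angle, le_div_iff₀ (ha.trans_le hp)]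
  calc (1 - b / a * (1 - ⟪x, y⟫)) * p = p - b * (1 - ⟪x, y⟫) * (p / a) := by
        field_simp
    _ ≤ p - b * (1 - ⟪x, y⟫) :=
        sub_le_sub_left (le_mul_of_one_le_right (mul_nonneg hb (by linarith))
          ((one_le_div ha).2 hp)) p
    _ ≤ ⟪f x, f y⟫ := by linarith

theorem le_cos_angle_map (f : E →ₗ[ℝ] F) {a b : ℝ} (ha : 0 < a)
    (hlo : ∀ x, a * ‖x‖ ^ 2 ≤ ‖f x‖ ^ 2) (hhi : ∀ x, ‖f x‖ ^ 2 ≤ b * ‖x‖ ^ 2)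
    {x y : E} (hx : x ≠ 0) (hy : y ≠ 0) :
    1 - b / a * (1 - Real.cos (angle x y)) ≤ Real.cos (angle (f x) (f y)) := by
  have hx' : 0 < ‖x‖⁻¹ := by positivity
  have hy' : 0 < ‖y‖⁻¹ := by positivity
  have hu : ‖‖x‖⁻¹ • x‖ = 1 := norm_smul_inv_norm hx
  have hv : ‖‖y‖⁻¹ • y‖ = 1 := norm_smul_inv_norm hy
  have h := le_cos_angle_map_of_norm_eq_one f ha hlo hhi hu hv
  rwa [map_smul, map_smul, angle_smul_left_of_pos _ _ hx', angle_smul_right_of_pos _ _ hy',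
    angle_smul_left_of_pos _ _ hx', angle_smul_right_of_pos _ _ hy'] at h

end InnerProductGeometry

namespace Matrix

variable {𝕜 : Type*} [RCLike 𝕜] {m n : Type*} [Fintype m] [Fintype n]
  [DecidableEq m] [DecidableEq n]

theorem norm_toEuclideanLin_sq (B : Matrix m n 𝕜) (x : EuclideanSpace 𝕜 n) :
    ‖toEuclideanLin B x‖ ^ 2 = RCLike.re ⟪x, toEuclideanLin (Bᴴ * B) x⟫_𝕜 := by
  rw [← inner_self_eq_norm_sq (𝕜 := 𝕜), ← LinearMap.adjoint_inner_right,
    ← toEuclideanLin_conjTranspose_eq_adjoint, toLpLin_mul_same]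
  rfl

namespace IsHermitian

variable {A : Matrix n n 𝕜} (hA : A.IsHermitian)

theorem repr_toEuclideanLin_apply (x : EuclideanSpace 𝕜 n) (i : n) :
    hA.eigenvectorBasis.repr (toEuclideanLin A x) i =
      hA.eigenvalues i * hA.eigenvectorBasis.repr x i := by
  have hAi : toEuclideanLin A (hA.eigenvectorBasis i) =
      (hA.eigenvalues i : 𝕜) • hA.eigenvectorBasis i := by
    ext j
    simpa [toLpLin_apply] using congrFun (hA.mulVec_eigenvectorBasis i) j
  rw [OrthonormalBasis.repr_apply_apply, OrthonormalBasis.repr_apply_apply,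
    ← isSymmetric_toEuclideanLin_iff.mpr hA, hAi, inner_smul_left, RCLike.conj_ofReal]

theorem re_inner_toEuclideanLin_self (x : EuclideanSpace 𝕜 n) :
    RCLike.re ⟪x, toEuclideanLin A x⟫_𝕜 =
      ∑ i, hA.eigenvalues i * ‖hA.eigenvectorBasis.repr x i‖ ^ 2 := by
  rw [← hA.eigenvectorBasis.repr.inner_map_map, PiLp.inner_apply, map_sum]
  refine Finset.sum_congr rfl fun i _ => ?_
  rw [repr_toEuclideanLin_apply hA, ← smul_eq_mul, inner_smul_real_right, RCLike.smul_re,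
    inner_self_eq_norm_sq]

theorem iInf_eigenvalues_mul_norm_sq_le (x : EuclideanSpace 𝕜 n) :
    (⨅ i, hA.eigenvalues i) * ‖x‖ ^ 2 ≤ RCLike.re ⟪x, toEuclideanLin A x⟫_𝕜 := by
  rw [re_inner_toEuclideanLin_self, ← hA.eigenvectorBasis.repr.norm_map,
    EuclideanSpace.norm_sq_eq, Finset.mul_sum]
  gcongr with i
  exact ciInf_le (Set.finite_range _).bddBelow i

theorem re_inner_le_iSup_eigenvalues_mul_norm_sq (x : EuclideanSpace 𝕜 n) :
    RCLike.re ⟪x, toEuclideanLin A x⟫_𝕜 ≤ (⨆ i, hA.eigenvalues i) * ‖x‖ ^ 2 := by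
  rw [re_inner_toEuclideanLin_self, ← hA.eigenvectorBasis.repr.norm_map,
    EuclideanSpace.norm_sq_eq, Finset.mul_sum]
  gcongr with i
  exact le_ciSup (Set.finite_range _).bddAbove i

end IsHermitian

end Matrix

theorem sparse_bp_input_angle_general {m n : ℕ} (W : Matrix (Fin m) (Fin n) ℝ) (ρ₁ : ℝ)
    (hpd : (W * Wᵀ).PosDef) (hH : (W * Wᵀ).IsHermitian)
    (hρ : (⨆ i, hH.eigenvalues i) / (⨅ i, hH.eigenvalues i) ≤ ρ₁)
    (g t : EuclideanSpace ℝ (Fin m)) (hg : g ≠ 0) (ht : t ≠ 0) :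
    angle (Matrix.toEuclideanLin Wᵀ g) (Matrix.toEuclideanLin Wᵀ t) ≤
      Real.arccos (ρ₁ * Real.cos (angle g t) + 1 - ρ₁) := by
  have : Nonempty (Fin m) := by
    by_contra h
    exact hg (by ext i; exact (h ⟨i⟩).elim)
  obtain ⟨i₀, hi₀⟩ := exists_eq_ciInf_of_finite (f := hH.eigenvalues)
  have hmin : 0 < ⨅ i, hH.eigenvalues i := hi₀ ▸ hpd.eigenvalues_pos i₀
  have hnorm (x : EuclideanSpace ℝ (Fin m)) :
      ‖toEuclideanLin Wᵀ x‖ ^ 2 = ⟪x, toEuclideanLin (W * Wᵀ) x⟫ := by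
    simpa using norm_toEuclideanLin_sq Wᵀ x
  have hcos := le_cos_angle_map (toEuclideanLin Wᵀ) hmin
    (fun x => hnorm x ▸ hH.iInf_eigenvalues_mul_norm_sq_le x)
    (fun x => hnorm x ▸ hH.re_inner_le_iSup_eigenvalues_mul_norm_sq x) hg ht
  rw [cos_angle (toEuclideanLin Wᵀ g)] at hcos
  refine Real.arccos_le_arccos (le_trans ?_ hcos)
  have hc : 0 ≤ 1 - Real.cos (angle g t) := sub_nonneg.2 (Real.cos_le_one _)
  linarith [mul_le_mul_of_nonneg_right hρ hc]

/-- Bound on the gradient estimation angle of the layer input: if `W Wᵀ` is positive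
definite with eigenvalues `s_i > 0`, `ρ₁ ≥ s_max/s_min`, and
`ρ₁ cos ∠(g,t) + 1 - ρ₁ > 0`, then
`∠(Wᵀg, Wᵀt) ≤ arccos(ρ₁ cos ∠(g,t) + 1 - ρ₁)`. -/
theorem sparse_bp_input_angle {m n : ℕ} (W : Matrix (Fin m) (Fin n) ℝ) (ρ₁ : ℝ)
    (hpd : (W * Wᵀ).PosDef) (hH : (W * Wᵀ).IsHermitian)
    (hρ : (⨆ i, hH.eigenvalues i) / (⨅ i, hH.eigenvalues i) ≤ ρ₁)
    (g t : EuclideanSpace ℝ (Fin m)) (hg : g ≠ 0) (ht : t ≠ 0)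
    (hpos : 0 < ρ₁ * Real.cos (angle g t) + 1 - ρ₁) :
    angle (Matrix.toEuclideanLin Wᵀ g) (Matrix.toEuclideanLin Wᵀ t) ≤
      Real.arccos (ρ₁ * Real.cos (angle g t) + 1 - ρ₁) :=
  sparse_bp_input_angle_general W ρ₁ hpd hH hρ g t hg ht
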